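/- arXiv:0808.0750 — 2 statements merged into one kernel-verified Lean document; each statement's English description precedes it below -/
import Mathlib

section
/- Let (Ω, F, P) be a probability space and W : ℝ≥0 → Ω → ℝ a measurable process such that: (i) W(0) = 0; (ii) for all 0 ≤ s ≤ t, the increment W(t) − W(s) has law gaussianReal 0 (t − s); (iii) for every finite increasing sequence of times 0 ≤ t₀ ≤ t₁ ≤ ⋯ ≤ tₙ, the increments W(t₁) − W(t₀), …, W(tₙ) − W(tₙ₋₁) are independent; (iv) almost every sample path t ↦ W(t,ω) is continuous. Then almost surely W(t,ω)/t → 0 as t → ∞. -/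
open Filter Topology MeasureTheory ProbabilityTheory NNReal

/-!
An increment of `W` over a time step `v` is centred Gaussian with variance `v`, so the Chernoff
bound gives `P(|ΔW| ≥ c) ≤ 16 v² / c⁴`. Over `[n, n + 1]` there are `2 ^ k` dyadic increments of
level `k`; with thresholds `(9/10) ^ k * δ n` their probabilities form a geometric series in `k`
(as `2 * (9/10)⁴ > 1`) adding up to `O(1 / (δ n)⁴)`, and
`P(|W n| ≥ δ n) ≤ 16 / (δ⁴ n²)`. Both bounds are summable in `n`, so by Borel–Cantelli, almost
surely for all large `n` none of these events happens. Chaining along dyadic points and continuity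
of the path then give `|W t| ≤ 11 δ n` on `[n, n + 1]`.
-/

lemma Real.exp_neg_le_two_div_sq {x : ℝ} (hx : 0 < x) : Real.exp (-x) ≤ 2 / x ^ 2 := by
  have := Real.pow_div_factorial_le_exp x hx.le 2
  rw [Real.exp_neg, inv_le_comm₀ (Real.exp_pos x) (by positivity)]
  simpa [Nat.factorial] using this

lemma MeasureTheory.ae_eventually_notMem_of_measure_le_div_pow {α : Type*}
    {mα : MeasurableSpace α} {μ : Measure α} {s : ℕ → Set α} {K : ℝ} {p : ℕ} (hp : 1 < p)
    (hs : ∀ n : ℕ, 0 < n → μ (s n) ≤ ENNReal.ofReal (K / n ^ p)) :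
    ∀ᵐ x ∂μ, ∀ᶠ n in atTop, x ∉ s n := by
  have hsum : Summable fun n : ℕ => K / ((n + 1 : ℕ) : ℝ) ^ p := by
    simpa [div_eq_mul_one_div K] using
      ((_root_.summable_nat_add_iff 1).2 (Real.summable_one_div_nat_pow.2 hp)).mul_left K
  have hshift := ae_eventually_notMem (μ := μ) (s := fun n => s (n + 1)) <|
    ne_top_of_le_ne_top hsum.tsum_ofReal_ne_top (ENNReal.tsum_le_tsum fun n => hs _ n.succ_pos)
  filter_upwards [hshift] with x hx
  rwa [← map_add_atTop_eq_nat 1, eventually_map]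

def DyadicIncrementsBounded (f : ℝ≥0 → ℝ) (a : ℝ≥0) (r c : ℝ) : Prop :=
  ∀ k j : ℕ, j < 2 ^ k → |f (a + (j + 1) / 2 ^ k) - f (a + j / 2 ^ k)| ≤ r ^ k * c

namespace DyadicIncrementsBounded

variable {f : ℝ≥0 → ℝ} {a : ℝ≥0} {r c : ℝ}

lemma abs_sub_le_sum (h : DyadicIncrementsBounded f a r c) (hc : 0 ≤ c) (hr : 0 ≤ r) :
    ∀ k j : ℕ, j ≤ 2 ^ k →
      |f (a + j / 2 ^ k) - f a| ≤ (∑ i ∈ Finset.range (k + 1), r ^ i) * c := by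
  intro k
  induction k with
  | zero =>
    intro j hj
    interval_cases j
    · simpa using hc
    · simpa using h 0 0 one_pos
  | succ k ih =>
    intro j hj
    have hhalf (q : ℕ) : ((2 * q : ℕ) : ℝ≥0) / 2 ^ (k + 1) = q / 2 ^ k := by
      push_cast; rw [pow_succ]; field_simp
    have hsum : (∑ i ∈ Finset.range (k + 2), r ^ i) * c
        = r ^ (k + 1) * c + (∑ i ∈ Finset.range (k + 1), r ^ i) * c := by
      rw [Finset.sum_range_succ]; ring
    rw [hsum]
    obtain ⟨q, rfl | rfl⟩ := Nat.even_or_odd' j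
    · rw [hhalf]
      exact (ih q (by omega)).trans (le_add_of_nonneg_left (by positivity))
    · have hstep := h (k + 1) (2 * q) (by omega)
      rw [hhalf] at hstep
      push_cast at hstep ⊢
      calc _ ≤ |f (a + (2 * q + 1) / 2 ^ (k + 1)) - f (a + q / 2 ^ k)|
              + |f (a + q / 2 ^ k) - f a| := abs_sub_le _ _ _
        _ ≤ _ := add_le_add hstep (ih q (by omega))

lemma abs_sub_le (h : DyadicIncrementsBounded f a r c) (hf : Continuous f) (hr₀ : 0 ≤ r)
    (hr₁ : r < 1) {t : ℝ≥0} (ht : t ∈ Set.Icc a (a + 1)) : |f t - f a| ≤ c / (1 - r) := by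
  have hc : 0 ≤ c := (abs_nonneg _).trans (by simpa using h 0 0 one_pos)
  obtain ⟨x, hx, rfl⟩ : ∃ x ≤ 1, t = a + x :=
    ⟨t - a, tsub_le_iff_left.2 ht.2, (add_tsub_cancel_of_le ht.1).symm⟩
  have hdyadic : Tendsto (fun k : ℕ => ((⌊x * 2 ^ k⌋₊ : ℕ) : ℝ≥0) / 2 ^ k) atTop (𝓝 x) := by
    rw [← NNReal.tendsto_coe]
    push_cast
    exact (tendsto_nat_floor_mul_div_atTop x.coe_nonneg).comp
      (tendsto_pow_atTop_atTop_of_one_lt one_lt_two)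
  have hlim := (((hf.tendsto _).comp
    ((tendsto_const_nhds (x := a)).add hdyadic)).sub_const (f a)).abs
  refine le_of_tendsto hlim (Eventually.of_forall fun k => ?_)
  have hfloor : ⌊x * 2 ^ k⌋₊ ≤ 2 ^ k :=
    Nat.floor_le_of_le (by simpa using mul_le_mul_of_nonneg_right hx (zero_le : (0 : ℝ≥0) ≤ 2 ^ k))
  have hgeom := geom_sum_Ico_le_of_lt_one (m := 0) (n := k + 1) hr₀ hr₁
  rw [← Finset.range_eq_Ico, pow_zero] at hgeom
  calc _ ≤ (∑ i ∈ Finset.range (k + 1), r ^ i) * c := h.abs_sub_le_sum hc hr₀ k _ hfloor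
    _ ≤ 1 / (1 - r) * c := by gcongr
    _ = c / (1 - r) := by ring

end DyadicIncrementsBounded

lemma tendsto_div_atTop_nhds_zero_of_abs_le_on_Icc {f : ℝ≥0 → ℝ}
    (h : ∀ ε > 0, ∀ᶠ n : ℕ in atTop, ∀ t ∈ Set.Icc (n : ℝ≥0) (n + 1), |f t| ≤ ε * n) :
    Tendsto (fun t : ℝ≥0 => f t / t) atTop (𝓝 0) := by
  refine Metric.tendsto_atTop.2 fun ε hε => ?_
  obtain ⟨N, hN⟩ := eventually_atTop.1 ((h (ε / 2) (half_pos hε)).and (eventually_gt_atTop 0))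
  refine ⟨N, fun t ht => ?_⟩
  obtain ⟨hbound, hn⟩ := hN ⌊t⌋₊ (Nat.le_floor ht)
  have hnt : (⌊t⌋₊ : ℝ) ≤ t := by exact_mod_cast Nat.floor_le t.2
  have ht₀ : (0 : ℝ) < t := (Nat.cast_pos.2 hn).trans_le hnt
  have hft := hbound t ⟨Nat.floor_le t.2, (Nat.lt_floor_add_one t).le⟩
  rw [dist_zero_right, norm_div, Real.norm_eq_abs, Real.norm_of_nonneg ht₀.le,
    div_lt_iff₀ ht₀]
  nlinarith

namespace ProbabilityTheory

variable {Ω : Type*} {mΩ : MeasurableSpace Ω} {μ : Measure Ω} {X : Ω → ℝ} {v : ℝ≥0}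
  {W : ℝ≥0 → Ω → ℝ}

lemma HasSubgaussianMGF.measureReal_abs_ge_le (h : HasSubgaussianMGF X v μ) {ε : ℝ}
    (hε : 0 ≤ ε) : μ.real {ω | ε ≤ |X ω|} ≤ 2 * Real.exp (-ε ^ 2 / (2 * v)) := by
  have hsplit : {ω | ε ≤ |X ω|} = {ω | ε ≤ X ω} ∪ {ω | ε ≤ (-X) ω} := by
    ext ω; simp only [Set.mem_ofPred_eq, le_abs', Set.mem_union, Pi.neg_apply, le_neg]; tauto
  calc μ.real {ω | ε ≤ |X ω|} ≤ μ.real {ω | ε ≤ X ω} + μ.real {ω | ε ≤ (-X) ω} :=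
        hsplit ▸ measureReal_union_le _ _
    _ ≤ _ := by linarith [h.measure_ge_le hε, h.neg.measure_ge_le hε]

lemma hasSubgaussianMGF_of_map_eq_gaussianReal (h : μ.map X = gaussianReal 0 v) :
    HasSubgaussianMGF X v μ := by
  have hX : AEMeasurable X μ := aemeasurable_of_map_neZero (by rw [h]; infer_instance)
  rw [← HasSubgaussianMGF.id_map_iff hX, h]
  exact ⟨fun t => integrable_exp_mul_gaussianReal t, fun t => by simp [mgf_id_gaussianReal]⟩

lemma measure_abs_ge_le_of_map_eq_gaussianReal [IsFiniteMeasure μ]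
    (h : μ.map X = gaussianReal 0 v) (hv : v ≠ 0) {ε : ℝ} (hε : 0 < ε) :
    μ {ω | ε ≤ |X ω|} ≤ ENNReal.ofReal (16 * v ^ 2 / ε ^ 4) := by
  have hv₀ : (0 : ℝ) < v := by positivity
  rw [← ofReal_measureReal]
  refine ENNReal.ofReal_le_ofReal ?_
  calc μ.real {ω | ε ≤ |X ω|} ≤ 2 * Real.exp (-(ε ^ 2 / (2 * v))) := by
        simpa only [neg_div] using
          (hasSubgaussianMGF_of_map_eq_gaussianReal h).measureReal_abs_ge_le hε.le
    _ ≤ 2 * (2 / (ε ^ 2 / (2 * v)) ^ 2) := by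
        gcongr; exact Real.exp_neg_le_two_div_sq (by positivity)
    _ = 16 * v ^ 2 / ε ^ 4 := by field_simp; ring

def HasGaussianIncrements (W : ℝ≥0 → Ω → ℝ) (μ : Measure Ω) : Prop :=
  ∀ s t : ℝ≥0, s ≤ t → μ.map (fun ω => W t ω - W s ω) = gaussianReal 0 (t - s)

lemma measure_not_dyadicIncrementsBounded_le [IsFiniteMeasure μ] (hW : HasGaussianIncrements W μ)
    (a : ℝ≥0) {r c : ℝ} (hr₀ : 0 < r) (hr : 1 < 2 * r ^ 4) (hc : 0 < c) :
    μ {ω | ¬ DyadicIncrementsBounded (W · ω) a r c} ≤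
      ENNReal.ofReal (16 / c ^ 4 * (1 - (2 * r ^ 4)⁻¹)⁻¹) := by
  set q := (2 * r ^ 4)⁻¹
  have hq₀ : 0 ≤ q := by positivity
  have hq₁ : q < 1 := inv_lt_one_of_one_lt₀ hr
  have hincrement (k j : ℕ) :
      μ {ω | r ^ k * c ≤ |W (a + (j + 1) / 2 ^ k) ω - W (a + j / 2 ^ k) ω|}
        ≤ ENNReal.ofReal (16 / c ^ 4 * q ^ k / 2 ^ k) := by
    have hlt : a + j / 2 ^ k < a + (j + 1) / 2 ^ k := by gcongr; exact lt_add_one _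
    have hlaw := hW _ _ hlt.le
    rw [add_tsub_add_eq_tsub_left, ← tsub_div, add_tsub_cancel_left] at hlaw
    refine (measure_abs_ge_le_of_map_eq_gaussianReal hlaw (by positivity)
      (by positivity)).trans_eq ?_
    congr 1
    rw [inv_pow, mul_pow, ← pow_mul]
    push_cast
    field_simp
    ring
  have hlevel (k : ℕ) : μ (⋃ j ∈ Finset.range (2 ^ k),
      {ω | r ^ k * c ≤ |W (a + (j + 1) / 2 ^ k) ω - W (a + j / 2 ^ k) ω|})
      ≤ ENNReal.ofReal (16 / c ^ 4 * q ^ k) := by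
    refine (measure_biUnion_finset_le _ _).trans ?_
    refine (Finset.sum_le_sum fun j _ => hincrement k j).trans_eq ?_
    rw [Finset.sum_const, Finset.card_range, nsmul_eq_mul, ← ENNReal.ofReal_natCast,
      ← ENNReal.ofReal_mul (by positivity)]
    push_cast
    field_simp
  calc μ {ω | ¬ DyadicIncrementsBounded (W · ω) a r c}
      ≤ μ (⋃ k : ℕ, ⋃ j ∈ Finset.range (2 ^ k),
          {ω | r ^ k * c ≤ |W (a + (j + 1) / 2 ^ k) ω - W (a + j / 2 ^ k) ω|}) := by
        refine measure_mono fun ω hω => ?_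
        simp only [DyadicIncrementsBounded, Set.mem_ofPred_eq, not_forall, not_le] at hω
        obtain ⟨k, j, hj, hlt⟩ := hω
        simp only [Set.mem_iUnion]
        exact ⟨k, j, Finset.mem_range.2 hj, hlt.le⟩
    _ ≤ ∑' k : ℕ, ENNReal.ofReal (16 / c ^ 4 * q ^ k) :=
        (measure_iUnion_le _).trans (ENNReal.tsum_le_tsum hlevel)
    _ = ENNReal.ofReal (16 / c ^ 4 * (1 - q)⁻¹) := by
        rw [← ENNReal.ofReal_tsum_of_nonneg (fun k => by positivity)
          ((summable_geometric_of_lt_one hq₀ hq₁).mul_left _), _root_.tsum_mul_left,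
          tsum_geometric_of_lt_one hq₀ hq₁]

lemma ae_eventually_abs_lt_mul [IsFiniteMeasure μ] (h0 : ∀ ω, W 0 ω = 0)
    (hW : HasGaussianIncrements W μ) {δ : ℝ} (hδ : 0 < δ) :
    ∀ᵐ ω ∂μ, ∀ᶠ n : ℕ in atTop, |W n ω| < δ * n := by
  have hbad := ae_eventually_notMem_of_measure_le_div_pow (μ := μ)
    (s := fun n : ℕ => {ω | δ * n ≤ |W n ω|}) (K := 16 / δ ^ 4) one_lt_two fun n hn => by
      have hlaw := hW 0 n bot_le
      simp only [h0, sub_zero, tsub_zero] at hlaw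
      refine (measure_abs_ge_le_of_map_eq_gaussianReal hlaw (by positivity)
        (by positivity)).trans_eq ?_
      push_cast
      field_simp
  filter_upwards [hbad] with ω hω using hω.mono fun n => not_le.1

lemma ae_eventually_dyadicIncrementsBounded [IsFiniteMeasure μ] (hW : HasGaussianIncrements W μ)
    {r δ : ℝ} (hr₀ : 0 < r) (hr : 1 < 2 * r ^ 4) (hδ : 0 < δ) :
    ∀ᵐ ω ∂μ, ∀ᶠ n : ℕ in atTop, DyadicIncrementsBounded (W · ω) n r (δ * n) := by
  have hbad := ae_eventually_notMem_of_measure_le_div_pow (μ := μ)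
    (s := fun n : ℕ => {ω | ¬ DyadicIncrementsBounded (W · ω) n r (δ * n)})
    (K := 16 / δ ^ 4 * (1 - (2 * r ^ 4)⁻¹)⁻¹) (p := 4) (by norm_num) fun n hn =>
      (measure_not_dyadicIncrementsBounded_le hW n hr₀ hr (by positivity)).trans_eq
        (by field_simp)
  filter_upwards [hbad] with ω hω using hω.mono fun n => not_not.1

end ProbabilityTheory

theorem brownian_strong_law_general {Ω : Type*} [MeasurableSpace Ω]
    (P : Measure Ω) [IsProbabilityMeasure P] (W : ℝ≥0 → Ω → ℝ)
    (h0 : ∀ ω, W 0 ω = 0)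
    (hincr : ∀ s t : ℝ≥0, s ≤ t →
      Measure.map (fun ω => W t ω - W s ω) P = gaussianReal 0 (t - s))
    (hcont : ∀ᵐ ω ∂P, Continuous fun t => W t ω) :
    ∀ᵐ ω ∂P, Tendsto (fun t : ℝ≥0 => W t ω / (t : ℝ)) atTop (𝓝 0) := by
  have hgood : ∀ᵐ ω ∂P, ∀ m : ℕ, ∀ᶠ n : ℕ in atTop,
      |W n ω| < 1 / (m + 1) * n ∧ DyadicIncrementsBounded (W · ω) n (9 / 10) (1 / (m + 1) * n) :=
    ae_all_iff.2 fun m => by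
      filter_upwards [ae_eventually_abs_lt_mul h0 hincr (δ := 1 / (m + 1)) (by positivity),
        ae_eventually_dyadicIncrementsBounded hincr (r := 9 / 10) (δ := 1 / (m + 1))
          (by norm_num) (by norm_num) (by positivity)] with ω hWn hdyadic using hWn.and hdyadic
  filter_upwards [hcont, hgood] with ω hω hgood
  refine tendsto_div_atTop_nhds_zero_of_abs_le_on_Icc fun ε hε => ?_
  obtain ⟨m, hm⟩ := exists_nat_one_div_lt (div_pos hε (by norm_num : (0 : ℝ) < 11))
  filter_upwards [hgood m] with n ⟨hWn, hdyadic⟩ t ht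
  calc |W t ω| ≤ |W t ω - W n ω| + |W n ω| := by
        linarith [abs_sub_abs_le_abs_sub (W t ω) (W n ω)]
    _ ≤ 1 / (m + 1) * n / (1 - 9 / 10) + 1 / (m + 1) * n :=
        add_le_add (hdyadic.abs_sub_le hω (by norm_num) (by norm_num) ht) hWn.le
    _ = 11 * (1 / (m + 1)) * n := by ring
    _ ≤ ε * n := by gcongr; linarith

/-- Strong law for Brownian motion: `W(t)/t → 0` almost surely as `t → ∞`. -/
theorem brownian_strong_law {Ω : Type*} [MeasurableSpace Ω]
    (P : Measure Ω) [IsProbabilityMeasure P] (W : ℝ≥0 → Ω → ℝ)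
    (hmeas : ∀ t, Measurable (W t))
    (h0 : ∀ ω, W 0 ω = 0)
    (hincr : ∀ s t : ℝ≥0, s ≤ t →
      Measure.map (fun ω => W t ω - W s ω) P = gaussianReal 0 (t - s))
    (hindep : ∀ (n : ℕ) (ts : Fin (n + 1) → ℝ≥0), Monotone ts →
      iIndepFun
        (fun i : Fin n => fun ω => W (ts i.succ) ω - W (ts i.castSucc) ω) P)
    (hcont : ∀ᵐ ω ∂P, Continuous fun t => W t ω) :
    ∀ᵐ ω ∂P, Tendsto (fun t : ℝ≥0 => W t ω / (t : ℝ)) atTop (𝓝 0) :=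
  brownian_strong_law_general P W h0 hincr hcont
end

section
/- Let (Ω, F, P) be a probability space and W : ℝ≥0 → Ω → ℝ a process such that: (i) for all 0 ≤ s ≤ t, the increment W(t) − W(s) has law gaussianReal 0 (t − s); (ii) for every finite increasing sequence of times the corresponding increments are independent. Fix T > 0 and for n ≥ 1 let Q_n := Σ_{j=0}^{n−1} (W((j+1)T/n) − W(jT/n))². Then E[(Q_n − T)²] = 2T²/n for every n ≥ 1; in particular Q_n converges to the constant T in L²(P) as n → ∞ (the quadratic variation of Brownian motion on [0,T] equals T). -/
/-!
The increments of `W` along the uniform partition of `[0, T]` are independent with law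
`N(0, T/n)`, so `Q_n - T = ∑ᵢ (ΔᵢW² - T/n)` is a sum of `n` independent centred variables, each of
variance `Var(Z²) = E Z⁴ - (E Z²)² = 3v² - v² = 2v²` for `Z ~ N(0, v)`, `v = T/n`. Hence
`E[(Q_n - T)²] = n · 2 (T/n)² = 2T²/n`. The fourth moment `E Z⁴ = 3v²` is the fourth derivative
at `0` of the moment generating function `t ↦ exp (v t² / 2)`.
-/

open Filter Topology MeasureTheory ProbabilityTheory NNReal
open Real

lemma integrable_pow_gaussianReal (μ : ℝ) (v : ℝ≥0) (n : ℕ) :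
    Integrable (fun x ↦ x ^ n) (gaussianReal μ v) :=
  integrable_pow_of_mem_interior_integrableExpSet (by simp) n

lemma memLp_sq_gaussianReal (μ : ℝ) (v : ℝ≥0) : MemLp (fun x ↦ x ^ 2) 2 (gaussianReal μ v) :=
  (memLp_two_iff_integrable_sq (by fun_prop)).2 <| by
    simpa only [← pow_mul] using integrable_pow_gaussianReal μ v (2 * 2)

lemma integral_sq_gaussianReal (v : ℝ≥0) : ∫ x, x ^ 2 ∂gaussianReal 0 v = v := by
  have h := variance_eq_sub (memLp_id_gaussianReal (μ := 0) (v := v) 2)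
  simp only [variance_id_gaussianReal, Pi.pow_apply, id_eq, integral_id_gaussianReal] at h
  linarith

lemma hasDerivAt_mul_exp_mul_sq_div_two {p : ℝ → ℝ} {p' : ℝ} (c : ℝ) {t : ℝ}
    (hp : HasDerivAt p p' t) :
    HasDerivAt (fun t ↦ p t * rexp (c * t ^ 2 / 2))
      ((p' + c * t * p t) * rexp (c * t ^ 2 / 2)) t := by
  have h : HasDerivAt (fun t ↦ c * t ^ 2 / 2) (c * t) t :=
    (((hasDerivAt_pow 2 t).const_mul c).div_const 2).congr_deriv (by push_cast; ring)
  exact (hp.mul h.exp).congr_deriv (by ring)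

lemma iteratedDeriv_four_exp_mul_sq_div_two (c : ℝ) :
    iteratedDeriv 4 (fun t ↦ rexp (c * t ^ 2 / 2)) 0 = 3 * c ^ 2 := by
  have d1 : iteratedDeriv 1 (fun t ↦ rexp (c * t ^ 2 / 2)) =
      fun t ↦ c * t * rexp (c * t ^ 2 / 2) := by
    rw [iteratedDeriv_one]; ext t
    simpa using (hasDerivAt_mul_exp_mul_sq_div_two c (hasDerivAt_const t (1 : ℝ))).deriv
  have d2 : iteratedDeriv 2 (fun t ↦ rexp (c * t ^ 2 / 2)) =
      fun t ↦ (c + c ^ 2 * t ^ 2) * rexp (c * t ^ 2 / 2) := by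
    rw [iteratedDeriv_succ, d1]; ext t
    rw [(hasDerivAt_mul_exp_mul_sq_div_two c ((hasDerivAt_id' t).const_mul c)).deriv]
    ring
  have d3 : iteratedDeriv 3 (fun t ↦ rexp (c * t ^ 2 / 2)) =
      fun t ↦ (3 * c ^ 2 * t + c ^ 3 * t ^ 3) * rexp (c * t ^ 2 / 2) := by
    rw [iteratedDeriv_succ, d2]; ext t
    rw [(hasDerivAt_mul_exp_mul_sq_div_two c
      (((hasDerivAt_pow 2 t).const_mul (c ^ 2)).const_add c)).deriv]
    push_cast
    ring
  rw [iteratedDeriv_succ, d3, (hasDerivAt_mul_exp_mul_sq_div_two c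
    (((hasDerivAt_id' 0).const_mul (3 * c ^ 2)).fun_add
      ((hasDerivAt_pow 3 0).const_mul (c ^ 3)))).deriv]
  simp

lemma integral_pow_gaussianReal_eq_iteratedDeriv (v : ℝ≥0) (n : ℕ) :
    ∫ x, x ^ n ∂gaussianReal 0 v = iteratedDeriv n (fun t ↦ rexp (v * t ^ 2 / 2)) 0 := by
  have h := iteratedDeriv_mgf_zero (X := fun x ↦ x) (μ := gaussianReal 0 v) (by simp) n
  simp only [mgf_fun_id_gaussianReal, zero_mul, zero_add] at h
  rw [h]
  rfl

lemma integral_pow_four_gaussianReal (v : ℝ≥0) : ∫ x, x ^ 4 ∂gaussianReal 0 v = 3 * v ^ 2 := by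
  rw [integral_pow_gaussianReal_eq_iteratedDeriv, iteratedDeriv_four_exp_mul_sq_div_two]

lemma variance_sq_gaussianReal (v : ℝ≥0) : Var[fun x ↦ x ^ 2; gaussianReal 0 v] = 2 * v ^ 2 := by
  rw [variance_eq_sub (memLp_sq_gaussianReal 0 v)]
  simp only [Pi.pow_apply, ← pow_mul, integral_pow_four_gaussianReal, integral_sq_gaussianReal]
  ring

lemma ProbabilityTheory.HasLaw.of_map_eq {Ω 𝓧 : Type*} [MeasurableSpace Ω] [MeasurableSpace 𝓧]
    {P : Measure Ω} {μ : Measure 𝓧} [NeZero μ] {X : Ω → 𝓧} (h : P.map X = μ) :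
    HasLaw X μ P where
  aemeasurable := by
    by_contra hX
    -- `Measure.map` along a map that is not a.e.-measurable is `0`.
    exact NeZero.ne μ (h ▸ Measure.map_of_not_aemeasurable hX)
  map_eq := h

section SumOfSquares

variable {Ω ι : Type*} [MeasurableSpace Ω] {P : Measure Ω} {v : ℝ≥0}

lemma memLp_sq_of_hasLaw_gaussianReal {Y : Ω → ℝ} (hY : HasLaw Y (gaussianReal 0 v) P) :
    MemLp (fun ω ↦ Y ω ^ 2) 2 P := by
  have h := memLp_sq_gaussianReal 0 v
  rw [← hY.map_eq] at h
  exact h.comp_of_map hY.aemeasurable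

variable [Fintype ι] {X : ι → Ω → ℝ}

lemma variance_sum_sq_of_hasLaw_gaussianReal (hX : ∀ i, HasLaw (X i) (gaussianReal 0 v) P)
    (hindep : Pairwise fun i j ↦ X i ⟂ᵢ[P] X j) :
    Var[fun ω ↦ ∑ i, X i ω ^ 2; P] = Fintype.card ι * (2 * v ^ 2) := by
  have hvar (i : ι) : Var[fun ω ↦ X i ω ^ 2; P] = 2 * v ^ 2 := by
    rw [← variance_sq_gaussianReal v, ← (hX i).map_eq,
      variance_map (by fun_prop) (hX i).aemeasurable]
    rfl
  have hsum := IndepFun.variance_sum (s := Finset.univ)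
    (fun i _ ↦ memLp_sq_of_hasLaw_gaussianReal (hX i))
    (fun i _ j _ hij ↦ (hindep hij).comp (measurable_id.pow_const 2) (measurable_id.pow_const 2))
  rw [Finset.sum_fn] at hsum
  simp [hsum, hvar]

variable [IsProbabilityMeasure P]

lemma integral_sum_sq_of_hasLaw_gaussianReal (hX : ∀ i, HasLaw (X i) (gaussianReal 0 v) P) :
    ∫ ω, ∑ i, X i ω ^ 2 ∂P = Fintype.card ι * v := by
  have hsq (i : ι) : ∫ ω, X i ω ^ 2 ∂P = v :=
    ((hX i).integral_comp (f := fun x ↦ x ^ 2) (by fun_prop)).trans (integral_sq_gaussianReal v)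
  rw [integral_finsetSum _ fun i _ ↦ (memLp_sq_of_hasLaw_gaussianReal (hX i)).integrable one_le_two]
  simp [hsq]

lemma integral_sum_sq_sub_sq_of_hasLaw_gaussianReal
    (hX : ∀ i, HasLaw (X i) (gaussianReal 0 v) P) (hindep : Pairwise fun i j ↦ X i ⟂ᵢ[P] X j) :
    ∫ ω, (∑ i, X i ω ^ 2 - Fintype.card ι * v) ^ 2 ∂P = Fintype.card ι * (2 * v ^ 2) := by
  rw [← variance_sum_sq_of_hasLaw_gaussianReal hX hindep, variance_eq_integral (by fun_prop),
    integral_sum_sq_of_hasLaw_gaussianReal hX]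

end SumOfSquares

noncomputable def uniformPartition (T : ℝ≥0) (n : ℕ) (i : Fin (n + 1)) : ℝ≥0 := i * T / n

lemma monotone_uniformPartition (T : ℝ≥0) (n : ℕ) : Monotone (uniformPartition T n) := by
  intro i j hij
  unfold uniformPartition
  gcongr
  exact_mod_cast hij

lemma uniformPartition_succ_sub_castSucc (T : ℝ≥0) {n : ℕ} (i : Fin n) :
    uniformPartition T n i.succ - uniformPartition T n i.castSucc = T / n := by
  simp only [uniformPartition, Fin.val_succ, Fin.val_castSucc, ← NNReal.sub_div]
  push_cast
  rw [add_mul, one_mul, add_tsub_cancel_left]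

theorem brownian_quadratic_variation_general {Ω : Type*} [MeasurableSpace Ω]
    (P : Measure Ω) [IsProbabilityMeasure P] (W : ℝ≥0 → Ω → ℝ)
    (hincr : ∀ s t : ℝ≥0, s ≤ t →
      Measure.map (fun ω => W t ω - W s ω) P = gaussianReal 0 (t - s))
    (hindep : ∀ (n : ℕ) (ts : Fin (n + 1) → ℝ≥0), Monotone ts →
      iIndepFun
        (fun i : Fin n => fun ω => W (ts i.succ) ω - W (ts i.castSucc) ω) P)
    (T : ℝ≥0)
    (Q : ℕ → Ω → ℝ)
    (hQ : ∀ n ω, Q n ω =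
      ∑ j ∈ Finset.range n, (W ((j + 1) * T / n) ω - W (j * T / n) ω) ^ 2) :
    (∀ n : ℕ, 1 ≤ n → (∫ ω, (Q n ω - (T : ℝ)) ^ 2 ∂P) = 2 * (T : ℝ) ^ 2 / n) ∧
    Tendsto (fun n : ℕ => ∫ ω, (Q n ω - (T : ℝ)) ^ 2 ∂P) atTop (𝓝 0) := by
  have hlaw (n : ℕ) (i : Fin n) : HasLaw
      (fun ω ↦ W (uniformPartition T n i.succ) ω - W (uniformPartition T n i.castSucc) ω)
      (gaussianReal 0 (T / n)) P :=
    .of_map_eq <| by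
      rw [hincr _ _ (monotone_uniformPartition T n (Fin.castSucc_le_succ i)),
        uniformPartition_succ_sub_castSucc]
  have hsum (n : ℕ) (ω : Ω) : Q n ω = ∑ i : Fin n,
      (W (uniformPartition T n i.succ) ω - W (uniformPartition T n i.castSucc) ω) ^ 2 := by
    rw [hQ, ← Fin.sum_univ_eq_sum_range]
    simp [uniformPartition]
  have key (n : ℕ) (hn : 1 ≤ n) : ∫ ω, (Q n ω - T) ^ 2 ∂P = 2 * (T : ℝ) ^ 2 / n := by
    have hT : (T : ℝ) = Fintype.card (Fin n) * ((T / n : ℝ≥0) : ℝ) := by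
      push_cast [Fintype.card_fin]
      field_simp
    simp_rw [hsum, hT, integral_sum_sq_sub_sq_of_hasLaw_gaussianReal (hlaw n)
      fun i j hij ↦ (hindep n _ (monotone_uniformPartition T n)).indepFun hij]
    push_cast [Fintype.card_fin]
    field_simp
  refine ⟨key, (tendsto_const_div_atTop_nhds_zero_nat (2 * (T : ℝ) ^ 2)).congr' ?_⟩
  filter_upwards [eventually_ge_atTop 1] with n hn using (key n hn).symm

/-- The quadratic variation of Brownian motion on `[0,T]` equals `T` in `L²`:
`E[(Q_n − T)²] = 2T²/n`, and `Q_n → T` in `L²(P)`. -/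
theorem brownian_quadratic_variation {Ω : Type*} [MeasurableSpace Ω]
    (P : Measure Ω) [IsProbabilityMeasure P] (W : ℝ≥0 → Ω → ℝ)
    (hincr : ∀ s t : ℝ≥0, s ≤ t →
      Measure.map (fun ω => W t ω - W s ω) P = gaussianReal 0 (t - s))
    (hindep : ∀ (n : ℕ) (ts : Fin (n + 1) → ℝ≥0), Monotone ts →
      iIndepFun
        (fun i : Fin n => fun ω => W (ts i.succ) ω - W (ts i.castSucc) ω) P)
    (T : ℝ≥0) (hT : 0 < T)
    (Q : ℕ → Ω → ℝ)
    (hQ : ∀ n ω, Q n ω =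
      ∑ j ∈ Finset.range n, (W ((j + 1) * T / n) ω - W (j * T / n) ω) ^ 2) :
    (∀ n : ℕ, 1 ≤ n → (∫ ω, (Q n ω - (T : ℝ)) ^ 2 ∂P) = 2 * (T : ℝ) ^ 2 / n) ∧
    Tendsto (fun n : ℕ => ∫ ω, (Q n ω - (T : ℝ)) ^ 2 ∂P) atTop (𝓝 0) :=
  brownian_quadratic_variation_general P W hincr hindep T Q hQ
end
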